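/- Let g : ℝ^n → ℝ^m be three times continuously differentiable and define G(z; u) = (g(x), (dg_x)ᵀλ − u + x) for z = (x,λ) ∈ ℝ^n × ℝ^m and parameter u ∈ ℝ^n. Suppose z and z′ are points with G(z; u) = 0 and G(z′; u′) = 0 for parameters u, u′ ∈ ℝ^n, and that the partial derivative ∂G/∂z at (z,u) is invertible. Define the Euler prediction step Δz = −(∂G/∂z (z,u))⁻¹ · (∂G/∂u (z,u)) · (u′ − u), and let M ≥ sup (1/2) · ‖(∂G/∂z (z,u))⁻¹‖ · ‖∂²G/∂z² (ξ, μ)‖, where the supremum is over all (ξ,μ) on the line segment between (z,u) and (z′,u′). Then ‖z′ − z − Δz‖ ≤ M · ‖z′ − z‖². -/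

import Mathlib

/-- The Lagrange multiplier map `G(z; w) = (g x, (dg_x)ᵀ λ − w + x)`, `z = (x, λ)`. -/
noncomputable def lagrangeG {n m : ℕ}
    (g : EuclideanSpace ℝ (Fin n) → EuclideanSpace ℝ (Fin m))
    (w : EuclideanSpace ℝ (Fin n))
    (z : EuclideanSpace ℝ (Fin n) × EuclideanSpace ℝ (Fin m)) :
    EuclideanSpace ℝ (Fin m) × EuclideanSpace ℝ (Fin n) :=
  (g z.1, ContinuousLinearMap.adjoint (fderiv ℝ g z.1) z.2 - w + z.1)

/-!
Shifting the parameter only adds a constant: `G(ξ; w) = G(ξ; u) + (0, u - w)`. Hence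
`∂G/∂z` does not depend on the parameter, `∂G/∂u = -inr`, so `Δz = D⁻¹ (0, u' - u)`, and
`G(z; u') = (0, u - u')`. Consequently `Δz - (z' - z)` is `D⁻¹` applied to the first-order
Taylor remainder of `G(·; u')` between `z` and `z'`, and the estimate is the second-order
Taylor bound with the sharp constant `1 / 2`.
-/

open Set

theorem exists_mk_mem_segment_of_mem_segment {𝕜 E F : Type*} [Semiring 𝕜] [PartialOrder 𝕜]
    [AddCommMonoid E] [AddCommMonoid F] [SMul 𝕜 E] [SMul 𝕜 F] {x x' ξ : E} {y y' : F}
    (hξ : ξ ∈ segment 𝕜 x x') : ∃ μ, (ξ, μ) ∈ segment 𝕜 (x, y) (x', y') := by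
  obtain ⟨s, t, hs, ht, hst, rfl⟩ := hξ
  exact ⟨s • y + t • y', s, t, hs, ht, hst, rfl⟩

section Taylor

variable {E F : Type*} [NormedAddCommGroup E] [NormedSpace ℝ E]
  [NormedAddCommGroup F] [NormedSpace ℝ F] {f : E → F} {a b : E} {K : ℝ}

theorem norm_fderiv_apply_sub_le_of_norm_fderiv_fderiv_le
    (hf' : ∀ x ∈ segment ℝ a b, DifferentiableAt ℝ (fderiv ℝ f) x)
    (hK : ∀ x ∈ segment ℝ a b, ‖fderiv ℝ (fderiv ℝ f) x‖ ≤ K) {t : ℝ} (ht : t ∈ Icc (0 : ℝ) 1) :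
    ‖fderiv ℝ f (a + t • (b - a)) (b - a) - fderiv ℝ f a (b - a)‖ ≤ K * ‖b - a‖ ^ 2 * t := by
  have hmem : a + t • (b - a) ∈ segment ℝ a b := by
    rw [segment_eq_image']
    exact ⟨t, ht, rfl⟩
  have hlip : ‖fderiv ℝ f (a + t • (b - a)) - fderiv ℝ f a‖ ≤ K * ‖a + t • (b - a) - a‖ :=
    (convex_segment a b).norm_image_sub_le_of_norm_fderiv_le hf' hK (left_mem_segment ℝ a b) hmem
  rw [add_sub_cancel_left, norm_smul, Real.norm_of_nonneg ht.1] at hlip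
  calc ‖fderiv ℝ f (a + t • (b - a)) (b - a) - fderiv ℝ f a (b - a)‖
      ≤ ‖fderiv ℝ f (a + t • (b - a)) - fderiv ℝ f a‖ * ‖b - a‖ :=
        (fderiv ℝ f (a + t • (b - a)) - fderiv ℝ f a).le_opNorm (b - a)
    _ ≤ K * (t * ‖b - a‖) * ‖b - a‖ := by gcongr
    _ = K * ‖b - a‖ ^ 2 * t := by ring

/-- Comparing `t ↦ f (a + t • (b - a)) - f a - t • f' a (b - a)` with `t ↦ K ‖b - a‖² t² / 2`
gives the sharp constant `1 / 2`; `taylor_mean_remainder_bound` would only give `1`. -/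
theorem norm_taylor_remainder_le_of_norm_fderiv_fderiv_le (hf : Differentiable ℝ f)
    (hf' : ∀ x ∈ segment ℝ a b, DifferentiableAt ℝ (fderiv ℝ f) x)
    (hK : ∀ x ∈ segment ℝ a b, ‖fderiv ℝ (fderiv ℝ f) x‖ ≤ K) :
    ‖f b - f a - fderiv ℝ f a (b - a)‖ ≤ K / 2 * ‖b - a‖ ^ 2 := by
  set v := b - a
  set r : ℝ → F := fun t => f (a + t • v) - f a - t • fderiv ℝ f a v
  have hr : ∀ t, HasDerivAt r (fderiv ℝ f (a + t • v) v - fderiv ℝ f a v) t := by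
    intro t
    have hline : HasDerivAt (fun t : ℝ => a + t • v) v t := by
      simpa using ((hasDerivAt_id t).smul_const v).const_add a
    exact (((hf _).hasFDerivAt.comp_hasDerivAt t hline).sub_const (f a)).sub
      (by simpa using (hasDerivAt_id t).smul_const (fderiv ℝ f a v))
  have hB : ∀ t : ℝ, HasDerivAt (fun t => K * ‖v‖ ^ 2 / 2 * t ^ 2) (K * ‖v‖ ^ 2 * t) t := by
    intro t
    refine ((hasDerivAt_pow 2 t).const_mul (K * ‖v‖ ^ 2 / 2)).congr_deriv ?_
    push_cast
    ring
  have hr1 : ‖r 1‖ ≤ K * ‖v‖ ^ 2 / 2 * 1 ^ 2 :=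
    image_norm_le_of_norm_deriv_right_le_deriv_boundary
      (fun t _ => (hr t).continuousAt.continuousWithinAt) (fun t _ => (hr t).hasDerivWithinAt)
      (by simp [r]) hB
      (fun t ht =>
        norm_fderiv_apply_sub_le_of_norm_fderiv_fderiv_le hf' hK (Ico_subset_Icc_self ht))
      (right_mem_Icc.2 zero_le_one)
  simpa [r, v, div_mul_eq_mul_div] using hr1

theorem norm_map_taylor_remainder_le {G : Type*} [NormedAddCommGroup G] [NormedSpace ℝ G]
    (L : F →L[ℝ] G) {M : ℝ} (hf : Differentiable ℝ f)
    (hf' : ∀ x ∈ segment ℝ a b, DifferentiableAt ℝ (fderiv ℝ f) x)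
    (hM : ∀ x ∈ segment ℝ a b, 1 / 2 * ‖L‖ * ‖fderiv ℝ (fderiv ℝ f) x‖ ≤ M) :
    ‖L (f b - f a - fderiv ℝ f a (b - a))‖ ≤ M * ‖b - a‖ ^ 2 := by
  set R := f b - f a - fderiv ℝ f a (b - a)
  rcases (norm_nonneg L).eq_or_lt with hL | hL
  · have hM0 : 0 ≤ M := by simpa [← hL] using hM a (left_mem_segment ℝ a b)
    calc ‖L R‖ ≤ ‖L‖ * ‖R‖ := L.le_opNorm R
      _ = 0 := by rw [← hL, zero_mul]
      _ ≤ M * ‖b - a‖ ^ 2 := by positivity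
  · have hR := norm_taylor_remainder_le_of_norm_fderiv_fderiv_le (K := 2 * M / ‖L‖) hf hf'
      fun x hx => by rw [le_div_iff₀ hL]; linarith [hM x hx]
    calc ‖L R‖ ≤ ‖L‖ * ‖R‖ := L.le_opNorm R
      _ ≤ ‖L‖ * (2 * M / ‖L‖ / 2 * ‖b - a‖ ^ 2) := by gcongr
      _ = M * ‖b - a‖ ^ 2 := by field_simp

end Taylor

theorem isBoundedLinearMap_adjoint_real {E F : Type*} [NormedAddCommGroup E]
    [InnerProductSpace ℝ E] [CompleteSpace E] [NormedAddCommGroup F] [InnerProductSpace ℝ F]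
    [CompleteSpace F] :
    IsBoundedLinearMap ℝ (ContinuousLinearMap.adjoint : (E →L[ℝ] F) → F →L[ℝ] E) :=
  ⟨⟨fun A B => map_add _ A B, fun c A => by simp⟩, 1, one_pos,
    fun A => by rw [one_mul, LinearIsometryEquiv.norm_map]⟩

section LagrangeMultiplierMap

variable {n m : ℕ} (g : EuclideanSpace ℝ (Fin n) → EuclideanSpace ℝ (Fin m))

theorem lagrangeG_eq_add_param (w u : EuclideanSpace ℝ (Fin n))
    (z : EuclideanSpace ℝ (Fin n) × EuclideanSpace ℝ (Fin m)) :
    lagrangeG g w z = lagrangeG g u z + (0, u - w) := by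
  simp only [lagrangeG, Prod.mk_add_mk, add_zero, Prod.mk.injEq, true_and]
  abel

theorem fderiv_lagrangeG_param (w u : EuclideanSpace ℝ (Fin n)) :
    fderiv ℝ (lagrangeG g w) = fderiv ℝ (lagrangeG g u) := by
  rw [funext (lagrangeG_eq_add_param g w u)]
  exact funext fun z => fderiv_add_const _

theorem hasFDerivAt_lagrangeG_param (z : EuclideanSpace ℝ (Fin n) × EuclideanSpace ℝ (Fin m))
    (u : EuclideanSpace ℝ (Fin n)) :
    HasFDerivAt (fun w => lagrangeG g w z)
      (-ContinuousLinearMap.inr ℝ (EuclideanSpace ℝ (Fin m)) (EuclideanSpace ℝ (Fin n))) u := by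
  have hG : (fun w => lagrangeG g w z) = fun w => lagrangeG g 0 z - (0, w) :=
    funext fun w => by rw [lagrangeG_eq_add_param g w 0, zero_sub, sub_eq_add_neg, Prod.neg_mk,
      neg_zero]
  rw [hG]
  exact (ContinuousLinearMap.inr ℝ (EuclideanSpace ℝ (Fin m))
    (EuclideanSpace ℝ (Fin n))).hasFDerivAt.const_sub _

theorem contDiff_lagrangeG {k : WithTop ℕ∞} (hg : ContDiff ℝ (k + 1) g)
    (w : EuclideanSpace ℝ (Fin n)) : ContDiff ℝ k (lagrangeG g w) := by
  have hx : ContDiff ℝ k fun z : EuclideanSpace ℝ (Fin n) × EuclideanSpace ℝ (Fin m) =>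
      g z.1 :=
    (hg.of_le le_self_add).comp contDiff_fst
  have hadj : ContDiff ℝ k fun z : EuclideanSpace ℝ (Fin n) × EuclideanSpace ℝ (Fin m) =>
      ContinuousLinearMap.adjoint (fderiv ℝ g z.1) :=
    isBoundedLinearMap_adjoint_real.contDiff.comp ((hg.fderiv_right le_rfl).comp contDiff_fst)
  have happ : ContDiff ℝ k fun z : EuclideanSpace ℝ (Fin n) × EuclideanSpace ℝ (Fin m) =>
      ContinuousLinearMap.adjoint (fderiv ℝ g z.1) z.2 :=
    (isBoundedBilinearMap_apply (𝕜 := ℝ) (E := EuclideanSpace ℝ (Fin m))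
      (F := EuclideanSpace ℝ (Fin n))).contDiff.comp (hadj.prodMk contDiff_snd)
  exact hx.prodMk ((happ.sub contDiff_const).add contDiff_fst)

end LagrangeMultiplierMap

/-- Quadratic accuracy of the Euler prediction step (the estimate in the proof of
Corollary 2.9): if `G(z;u) = 0`, `G(z';u') = 0`, `∂G/∂z(z,u)` is invertible,
`Δz = −(∂G/∂z(z,u))⁻¹ ∂G/∂u(z,u) (u' − u)` is the Euler predictor, and `M` bounds
`(1/2) ‖(∂G/∂z(z,u))⁻¹‖ ‖∂²G/∂z²(ξ,μ)‖` over the segment between `(z,u)` and `(z',u')`,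
then `‖z' − z − Δz‖ ≤ M ‖z' − z‖²`. -/
theorem euler_prediction_quadratic_estimate
    (n m : ℕ) (g : EuclideanSpace ℝ (Fin n) → EuclideanSpace ℝ (Fin m))
    (hg : ContDiff ℝ 3 g)
    (z z' : EuclideanSpace ℝ (Fin n) × EuclideanSpace ℝ (Fin m))
    (u u' : EuclideanSpace ℝ (Fin n))
    (hz : lagrangeG g u z = 0) (hz' : lagrangeG g u' z' = 0)
    (D : (EuclideanSpace ℝ (Fin n) × EuclideanSpace ℝ (Fin m)) ≃L[ℝ]
        (EuclideanSpace ℝ (Fin m) × EuclideanSpace ℝ (Fin n)))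
    (hD : (D : (EuclideanSpace ℝ (Fin n) × EuclideanSpace ℝ (Fin m)) →L[ℝ]
        (EuclideanSpace ℝ (Fin m) × EuclideanSpace ℝ (Fin n))) =
      fderiv ℝ (lagrangeG g u) z)
    (Δz : EuclideanSpace ℝ (Fin n) × EuclideanSpace ℝ (Fin m))
    (hΔz : Δz = -(D.symm ((fderiv ℝ (fun w => lagrangeG g w z) u) (u' - u))))
    (M : ℝ)
    (hM : ∀ q ∈ segment ℝ
        ((z, u) : (EuclideanSpace ℝ (Fin n) × EuclideanSpace ℝ (Fin m)) ×
          EuclideanSpace ℝ (Fin n)) (z', u'),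
      (1 / 2) * ‖(D.symm : (EuclideanSpace ℝ (Fin m) × EuclideanSpace ℝ (Fin n)) →L[ℝ]
            (EuclideanSpace ℝ (Fin n) × EuclideanSpace ℝ (Fin m)))‖ *
          ‖fderiv ℝ (fun w => fderiv ℝ (lagrangeG g q.2) w) q.1‖ ≤ M) :
    ‖z' - z - Δz‖ ≤ M * ‖z' - z‖ ^ 2 := by
  have hG : ContDiff ℝ 2 (lagrangeG g u') := contDiff_lagrangeG g (k := 2) hg u'
  have hderiv := fderiv_lagrangeG_param g u' u
  have hΔ : Δz = D.symm (0, u' - u) := by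
    rw [hΔz, (hasFDerivAt_lagrangeG_param g z u).fderiv, neg_apply, map_neg,
      neg_neg, ContinuousLinearMap.inr_apply]
  have hremainder : Δz - (z' - z) = D.symm (lagrangeG g u' z' - lagrangeG g u' z
      - fderiv ℝ (lagrangeG g u') z (z' - z)) := by
    rw [hz', lagrangeG_eq_add_param g u' u, hz, hderiv, ← hD, hΔ]
    simp only [zero_add, zero_sub, Prod.neg_mk, neg_zero, neg_sub, ContinuousLinearEquiv.coe_coe,
      map_sub, ContinuousLinearEquiv.symm_apply_apply]
  rw [← norm_neg, neg_sub, hremainder, ← D.symm.coe_coe]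
  have hG' : Differentiable ℝ (fderiv ℝ (lagrangeG g u')) :=
    (hG.fderiv_right (m := 1) (by norm_num)).differentiable one_ne_zero
  refine norm_map_taylor_remainder_le _ (hG.differentiable (by norm_num))
    (fun ξ _ => hG'.differentiableAt) fun ξ hξ => ?_
  obtain ⟨μ, hμ⟩ := exists_mk_mem_segment_of_mem_segment (y := u) (y' := u') hξ
  simpa [hderiv, fderiv_lagrangeG_param g μ u] using hM _ hμ
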